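/- Under the allocation rule Y(p) = λ/p and the reimbursement function Φ(p) = Σ_n λ_n²/p_n, a PoI maximizing Φ(p) - C(y) subject to y_n = λ_n/p_n chooses, at any interior optimum, bids satisfying p_n = (1/y_n)·∂C/∂y_n(y) where y_n = λ_n/p_n; i.e., the PoI's first-order condition is equivalent to this truthfulness identity. -/

import Mathlib

/-!
The payoff `Φ(b) - C(λ / b)` is a sum of functions of the single coordinates `b m` plus `C`
composed with a diagonal map, so its `n`-th partial derivative at `p` is
`(λ_n / p_n²) · (∂_n C(y) - λ_n)`. The prefactor never vanishes, so the first-order condition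
says `∂_n C(y) = λ_n = p_n y_n`, which is the truthfulness identity.
-/

open Finset

section Derivatives

variable {ι : Type*} [Fintype ι]

theorem hasFDerivAt_const_div_apply (c : ℝ) {p : ι → ℝ} {m : ι} (hp : p m ≠ 0) :
    HasFDerivAt (fun b : ι → ℝ => c / b m)
      ((-c / p m ^ 2) • (ContinuousLinearMap.proj m : (ι → ℝ) →L[ℝ] ℝ)) p := by
  have hderiv : HasDerivAt (fun x : ℝ => c / x) (-c / p m ^ 2) (p m) := by
    simpa [div_eq_mul_inv, neg_div] using (hasDerivAt_inv hp).const_mul c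
  exact hderiv.comp_hasFDerivAt p (hasFDerivAt_apply m p)

theorem hasFDerivAt_const_div_pi (c : ι → ℝ) {p : ι → ℝ} (hp : ∀ m, p m ≠ 0) :
    HasFDerivAt (fun (b : ι → ℝ) m => c m / b m)
      (ContinuousLinearMap.pi fun m =>
        (-c m / p m ^ 2) • (ContinuousLinearMap.proj m : (ι → ℝ) →L[ℝ] ℝ)) p :=
  hasFDerivAt_pi'.2 fun m => hasFDerivAt_const_div_apply (c m) (hp m)

theorem hasFDerivAt_comp_const_div {C : (ι → ℝ) → ℝ} (c : ι → ℝ) {p : ι → ℝ}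
    (hp : ∀ m, p m ≠ 0) (hC : DifferentiableAt ℝ C fun m => c m / p m) :
    HasFDerivAt (fun b : ι → ℝ => C fun m => c m / b m)
      ((fderiv ℝ C fun m => c m / p m).comp (ContinuousLinearMap.pi fun m =>
        (-c m / p m ^ 2) • (ContinuousLinearMap.proj m : (ι → ℝ) →L[ℝ] ℝ))) p :=
  hC.hasFDerivAt.comp p (hasFDerivAt_const_div_pi c hp)

variable [DecidableEq ι]

theorem fderiv_sum_const_div_single (c : ι → ℝ) {p : ι → ℝ} (hp : ∀ m, p m ≠ 0) (n : ι) :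
    fderiv ℝ (fun b : ι → ℝ => ∑ m, c m / b m) p (Pi.single n 1) = -c n / p n ^ 2 := by
  rw [(HasFDerivAt.fun_sum fun m _ => hasFDerivAt_const_div_apply (c m) (hp m)).fderiv]
  simp [Pi.single_apply]

theorem fderiv_comp_const_div_single {C : (ι → ℝ) → ℝ} (c : ι → ℝ) {p : ι → ℝ}
    (hp : ∀ m, p m ≠ 0) (hC : DifferentiableAt ℝ C fun m => c m / p m) (n : ι) :
    fderiv ℝ (fun b : ι → ℝ => C fun m => c m / b m) p (Pi.single n 1)
      = -c n / p n ^ 2 * fderiv ℝ C (fun m => c m / p m) (Pi.single n 1) := by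
  have hsingle : (ContinuousLinearMap.pi fun m =>
      (-c m / p m ^ 2) • (ContinuousLinearMap.proj m : (ι → ℝ) →L[ℝ] ℝ))
      (Pi.single n (1 : ℝ)) = (-c n / p n ^ 2) • Pi.single n 1 := by
    ext m
    rcases eq_or_ne m n with rfl | hmn
    · simp
    · simp [hmn]
  rw [(hasFDerivAt_comp_const_div c hp hC).fderiv, ContinuousLinearMap.comp_apply, hsingle,
    map_smul, smul_eq_mul]

theorem fderiv_bidding_payoff_single {C : (ι → ℝ) → ℝ} (lam : ι → ℝ) {p : ι → ℝ}
    (hp : ∀ m, p m ≠ 0) (hC : DifferentiableAt ℝ C fun m => lam m / p m) (n : ι) :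
    fderiv ℝ (fun b : ι → ℝ => (∑ m, lam m ^ 2 / b m) - C fun m => lam m / b m) p
        (Pi.single n 1)
      = lam n / p n ^ 2 * (fderiv ℝ C (fun m => lam m / p m) (Pi.single n 1) - lam n) := by
  have hΦ := (HasFDerivAt.fun_sum fun m (_ : m ∈ univ) =>
    hasFDerivAt_const_div_apply (lam m ^ 2) (hp m)).differentiableAt
  have hCy := (hasFDerivAt_comp_const_div lam hp hC).differentiableAt
  rw [fderiv_fun_sub hΦ hCy, sub_apply,
    fderiv_sum_const_div_single _ hp, fderiv_comp_const_div_single lam hp hC]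
  ring

end Derivatives

theorem poi_bidding_foc_iff_truthful_general (N : ℕ)
    (C : (Fin N → ℝ) → ℝ) (hC : Differentiable ℝ C)
    (lam : Fin N → ℝ) (hlam : ∀ n, 0 < lam n)
    (p : Fin N → ℝ) (hp : ∀ n, 0 < p n)
    (y : Fin N → ℝ) (hy : y = fun n => lam n / p n) :
    ((∀ n, fderiv ℝ
        (fun b : Fin N → ℝ =>
          (∑ m, (lam m) ^ 2 / b m) - C (fun m => lam m / b m))
        p (Pi.single n 1) = 0)
      ↔
     (∀ n, p n = (1 / y n) * fderiv ℝ C y (Pi.single n 1))) := by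
  subst hy
  have hpne : ∀ n, p n ≠ 0 := fun n => (hp n).ne'
  refine forall_congr' fun n => ?_
  rw [fderiv_bidding_payoff_single lam hpne (hC _) n, mul_eq_zero, sub_eq_zero, one_div_div,
    or_iff_right (div_pos (hlam n) (pow_pos (hp n) 2)).ne', div_mul_eq_mul_div,
    eq_div_iff (hlam n).ne', mul_right_inj' (hpne n), eq_comm]

/-- Under allocation `y_n = λ_n/p_n` and reimbursement
`Φ(p) = Σ_n λ_n²/p_n`, the first-order condition of the PoI's bidding problem
(maximize `Φ(p) - C(y(p))`) at an interior point `p` is equivalent to the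
truthfulness identity `p_n = (1/y_n)·∂C/∂y_n(y)`. -/
theorem poi_bidding_foc_iff_truthful (N : ℕ)
    (C : (Fin N → ℝ) → ℝ) (hC : Differentiable ℝ C)
    (hCconv : ConvexOn ℝ Set.univ C)
    (lam : Fin N → ℝ) (hlam : ∀ n, 0 < lam n)
    (p : Fin N → ℝ) (hp : ∀ n, 0 < p n)
    (y : Fin N → ℝ) (hy : y = fun n => lam n / p n) :
    ((∀ n, fderiv ℝ
        (fun b : Fin N → ℝ =>
          (∑ m, (lam m) ^ 2 / b m) - C (fun m => lam m / b m))
        p (Pi.single n 1) = 0)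
      ↔
     (∀ n, p n = (1 / y n) * fderiv ℝ C y (Pi.single n 1))) :=
  poi_bidding_foc_iff_truthful_general N C hC lam hlam p hp y hy
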